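/- For d = 2r+1 with r ≥ 4 even and m ≥ 1, rc(G(rd^m,d)) = src(G(rd^m,d)) = r·m + r/2. -/

import Mathlib

open SimpleGraph Finset

/-- An edge-coloring with colors `< k` such that every two vertices are joined by a
path whose edge colors are pairwise distinct. -/
def RainbowConnected {V : Type*} (G : SimpleGraph V) (k : ℕ) : Prop :=
  ∃ c : Sym2 V → ℕ, (∀ e ∈ G.edgeSet, c e < k) ∧
    ∀ u v : V, ∃ p : G.Walk u v, p.IsPath ∧ (p.edges.map c).Nodup

/-- As above, but the rainbow path must be a geodesic. -/
def StrongRainbowConnected {V : Type*} (G : SimpleGraph V) (k : ℕ) : Prop :=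
  ∃ c : Sym2 V → ℕ, (∀ e ∈ G.edgeSet, c e < k) ∧
    ∀ u v : V, ∃ p : G.Walk u v, p.IsPath ∧ p.length = G.dist u v ∧ (p.edges.map c).Nodup

/-- The rainbow connection number. -/
noncomputable def rc {V : Type*} (G : SimpleGraph V) : ℕ := sInf {k | RainbowConnected G k}

/-- The strong rainbow connection number. -/
noncomputable def src {V : Type*} (G : SimpleGraph V) : ℕ := sInf {k | StrongRainbowConnected G k}
/-- The recursive circulant `G(N,d)`: the circulant graph on `ZMod N` with jumps
`±d^i` for `0 ≤ i ≤ ⌈log_d N⌉ - 1`. -/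
def recCirc (N d : ℕ) : SimpleGraph (ZMod N) :=
  SimpleGraph.circulantGraph {x : ZMod N | ∃ i < Nat.clog d N, x = (d : ZMod N) ^ i}

/-- The value of a step: `(j, true)` is `+d^j` and `(j, false)` is `-d^j`. -/
def stepVal (N d : ℕ) (p : ℕ × Bool) : ZMod N :=
  if p.2 then (d : ZMod N) ^ p.1 else -((d : ZMod N) ^ p.1)

/-!
Write the difference of two vertices in base `d = 2r + 1` with balanced digits: `m` digits in
`[-r, r]` and a top digit of absolute value at most `r / 2`, which suffices because `r d ^ m = 0`.
Since `d > 2r`, a carry never shortens such a representation, so walking digit by digit along the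
jumps `±d ^ i` is a geodesic. Colour the edge `{a, a + d ^ i}` by `i r + (a mod r)`, with `a mod r/2`
instead for `i = m`; because `d ≡ 1 (mod r)`, a run of at most `r` (resp. `r / 2`) equal jumps meets
distinct colours, so these geodesics are rainbow with `r m + r / 2` colours. Conversely the vertex
with digits `(r, …, r, r / 2)` is at distance `r m + r / 2`, which bounds the length of every
rainbow path to it.
-/

lemma SimpleGraph.exists_walk_add_nsmul {V : Type*} [AddMonoid V] {G : SimpleGraph V}
    {g : V} (hg : ∀ w, G.Adj w (w + g)) (u : V) :
    ∀ k : ℕ, ∃ p : G.Walk u (u + k • g),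
      p.edges = (List.range k).map fun t => s(u + t • g, u + t • g + g)
  | 0 => ⟨Walk.nil.copy rfl (by simp), by simp⟩
  | k + 1 => by
    obtain ⟨p, hp⟩ := SimpleGraph.exists_walk_add_nsmul hg u k
    refine ⟨(p.concat (hg _)).copy rfl (by rw [succ_nsmul, add_assoc]), ?_⟩
    rw [Walk.edges_copy, Walk.edges_concat, hp, List.range_succ, List.map_append,
      List.concat_eq_append, List.map_singleton]

lemma SimpleGraph.Walk.length_le_of_nodup_map {V : Type*} {G : SimpleGraph V} {u v : V}
    (p : G.Walk u v) {c : Sym2 V → ℕ} {k : ℕ} (hc : ∀ e ∈ G.edgeSet, c e < k)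
    (hp : (p.edges.map c).Nodup) : p.length ≤ k := by
  have hsub : (p.edges.map c).toFinset ⊆ Finset.range k := by
    intro x hx
    obtain ⟨e, he, rfl⟩ := List.mem_map.1 (List.mem_toFinset.1 hx)
    exact Finset.mem_range.2 (hc e (p.edges_subset_edgeSet he))
  simpa [List.toFinset_card_of_nodup hp] using Finset.card_le_card hsub

lemma StrongRainbowConnected.rainbowConnected {V : Type*} {G : SimpleGraph V} {k : ℕ}
    (h : StrongRainbowConnected G k) : RainbowConnected G k := by
  obtain ⟨c, hc, hp⟩ := h
  exact ⟨c, hc, fun u v => by obtain ⟨p, hpath, -, hnd⟩ := hp u v; exact ⟨p, hpath, hnd⟩⟩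

lemma rc_eq_and_src_eq {V : Type*} {G : SimpleGraph V} {k : ℕ}
    (hs : StrongRainbowConnected G k) (h : ∀ j, RainbowConnected G j → k ≤ j) :
    rc G = k ∧ src G = k := by
  have hrc : RainbowConnected G k := hs.rainbowConnected
  refine ⟨le_antisymm (Nat.sInf_le hrc) (h _ ?_), le_antisymm (Nat.sInf_le hs) (h _ ?_)⟩
  · exact Nat.sInf_mem (s := {j | RainbowConnected G j}) ⟨k, hrc⟩
  · exact (Nat.sInf_mem (s := {j | StrongRainbowConnected G j}) ⟨k, hs⟩).rainbowConnected

namespace RecCirc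

def ofDigits (b : ℕ) : List ℤ → ℤ
  | [] => 0
  | a :: L => a + b * ofDigits b L

def weight (L : List ℤ) : ℕ := (L.map Int.natAbs).sum

@[simp] lemma weight_nil : weight [] = 0 := rfl

@[simp] lemma weight_cons (a : ℤ) (L : List ℤ) : weight (a :: L) = a.natAbs + weight L := by
  simp [weight]

lemma ofDigits_replicate_zero (b k : ℕ) : ofDigits b (List.replicate k 0) = 0 := by
  induction k with
  | zero => rfl
  | succ k ih => simp [List.replicate_succ, ofDigits, ih]

lemma weight_replicate_zero (k : ℕ) : weight (List.replicate k 0) = 0 := by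
  simp [weight]

lemma ofDigits_modify_add (b : ℕ) (ε : ℤ) :
    ∀ (L : List ℤ) (i : ℕ), i < L.length →
      ofDigits b (L.modify i (· + ε)) = ofDigits b L + ε * b ^ i
  | a :: L, 0, _ => by simp only [List.modify_zero_cons, ofDigits]; ring
  | a :: L, i + 1, h => by
    simp only [List.modify_succ_cons, ofDigits,
      ofDigits_modify_add b ε L i (by simpa using h)]
    ring

lemma weight_modify_add_le (ε : ℤ) :
    ∀ (L : List ℤ) (i : ℕ), weight (L.modify i (· + ε)) ≤ weight L + ε.natAbs
  | [], _ => by simp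
  | a :: L, 0 => by simpa [add_right_comm] using Int.natAbs_add_le a ε
  | a :: L, i + 1 => by simpa [add_assoc] using weight_modify_add_le ε L i

inductive Balanced (r : ℕ) : ℕ → List ℤ → Prop
  | top {b : ℤ} : b.natAbs ≤ r / 2 → Balanced r 0 [b]
  | cons {k : ℕ} {b : ℤ} {B : List ℤ} : b.natAbs ≤ r → Balanced r k B → Balanced r (k + 1) (b :: B)

lemma natAbs_bmod_le (x : ℤ) {n : ℕ} (hn : 0 < n) : (x.bmod n).natAbs ≤ n / 2 := by
  have := Int.le_bmod (x := x) hn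
  have := Int.bmod_lt (x := x) hn
  omega

lemma natCast_mul_pow_succ (r k : ℕ) : ((r * (2 * r + 1) ^ (k + 1) : ℕ) : ℤ)
    = ((2 * r + 1 : ℕ) : ℤ) * (r * (2 * r + 1) ^ k : ℕ) := by
  push_cast
  ring

lemma exists_balanced_modEq {r : ℕ} (hr : 0 < r) :
    ∀ (k : ℕ) (x : ℤ), ∃ B, Balanced r k B ∧
      ofDigits (2 * r + 1) B ≡ x [ZMOD (r * (2 * r + 1) ^ k : ℕ)]
  | 0, x => ⟨[x.bmod r], .top (natAbs_bmod_le x hr), by simp [ofDigits, Int.ModEq]⟩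
  | k + 1, x => by
    obtain ⟨B, hB, hBx⟩ := exists_balanced_modEq hr k (x.bdiv (2 * r + 1))
    refine ⟨x.bmod (2 * r + 1) :: B, .cons ?_ hB, ?_⟩
    · exact (natAbs_bmod_le x (n := 2 * r + 1) (by omega)).trans (by omega)
    · rw [natCast_mul_pow_succ]
      calc ofDigits (2 * r + 1) (x.bmod (2 * r + 1) :: B)
          = x.bmod (2 * r + 1) + (2 * r + 1 : ℕ) * ofDigits (2 * r + 1) B := rfl
        _ ≡ x.bmod (2 * r + 1) + (2 * r + 1 : ℕ) * x.bdiv (2 * r + 1)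
            [ZMOD ((2 * r + 1 : ℕ) : ℤ) * (r * (2 * r + 1) ^ k : ℕ)] :=
          (Int.ModEq.mul_left' hBx).add_left _
        _ = x := Int.bmod_add_bdiv x _

lemma natAbs_le_natAbs_add_mul {b : ℤ} {n : ℕ} (hb : 2 * b.natAbs ≤ n) (t : ℤ) :
    b.natAbs ≤ (b + n * t).natAbs := by
  have hn : (2 * b.natAbs : ℤ) ≤ n := by exact_mod_cast hb
  rcases lt_trichotomy t 0 with ht | rfl | ht
  · have : (n : ℤ) * t ≤ -n := by nlinarith
    omega
  · simp
  · have : (n : ℤ) ≤ n * t := by nlinarith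
    omega

lemma natAbs_add_natAbs_le {b : ℤ} {n : ℕ} (hb : 2 * b.natAbs < n) (t : ℤ) :
    b.natAbs + t.natAbs ≤ (b + n * t).natAbs := by
  have hn : (2 * b.natAbs + 1 : ℤ) ≤ n := by exact_mod_cast hb
  rcases lt_trichotomy t 0 with ht | rfl | ht
  · have : (n : ℤ) * t ≤ t - 2 * b.natAbs := by nlinarith
    omega
  · simp
  · have : t + 2 * b.natAbs ≤ (n : ℤ) * t := by nlinarith
    omega

lemma weight_le_of_balanced {r k : ℕ} {B : List ℤ} (hB : Balanced r k B) {L : List ℤ}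
    (hL : L.length = k + 1)
    (h : ofDigits (2 * r + 1) L ≡ ofDigits (2 * r + 1) B [ZMOD (r * (2 * r + 1) ^ k : ℕ)]) :
    weight B ≤ weight L := by
  induction hB generalizing L with
  | @top b hb =>
    obtain ⟨n, rfl⟩ := List.length_eq_one_iff.1 hL
    obtain ⟨t, ht⟩ := Int.modEq_iff_dvd.1 h.symm
    have hn : n = b + r * t := by
      simp only [ofDigits, pow_zero, mul_one, mul_zero, add_zero] at ht
      omega
    simpa [hn] using natAbs_le_natAbs_add_mul (by omega) t
  | @cons k b B hb hB ih =>
    obtain ⟨n, n', L, rfl⟩ : ∃ n n' L', L = n :: n' :: L' := by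
      match L, hL with
      | n :: n' :: L', _ => exact ⟨_, _, _, rfl⟩
    rw [natCast_mul_pow_succ] at h
    obtain ⟨t, ht⟩ : ((2 * r + 1 : ℕ) : ℤ) ∣ n - b := by
      have h' := h.of_mul_right _
      simp only [ofDigits, Int.ModEq, Int.add_mul_emod_self_left] at h'
      exact Int.ModEq.dvd h'.symm
    -- carrying `t` into the next digit costs at most `|t|`, and `|b| + |t| ≤ |n|`
    have hn : n = b + ((2 * r + 1 : ℕ) : ℤ) * t := by linarith
    have hcarry : ofDigits (2 * r + 1) ((n' + t) :: L) ≡ ofDigits (2 * r + 1) B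
        [ZMOD (r * (2 * r + 1) ^ k : ℕ)] := by
      refine Int.ModEq.mul_left_cancel' (c := ((2 * r + 1 : ℕ) : ℤ)) (by positivity) ?_
      refine Int.ModEq.add_left_cancel' b ?_
      convert h using 1
      · simp only [ofDigits]
        linear_combination -hn
      · rfl
    have hlow := natAbs_add_natAbs_le (b := b) (n := 2 * r + 1) (by omega) t
    have hle := ih (L := (n' + t) :: L) (by simpa using hL) hcarry
    have := Int.natAbs_add_le n' t
    rw [← hn] at hlow
    simp only [weight_cons] at hle ⊢
    omega

lemma exists_sign_of_adj {N d : ℕ} {u w : ZMod N} (h : (recCirc N d).Adj u w) :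
    ∃ i < Nat.clog d N, ∃ ε : ℤ, ε.natAbs = 1 ∧ w - u = ε * (d : ZMod N) ^ i := by
  rw [recCirc, circulantGraph_adj] at h
  obtain ⟨-, ⟨i, hi, hx⟩ | ⟨i, hi, hx⟩⟩ := h
  · exact ⟨i, hi, -1, rfl, by rw [Int.cast_neg, Int.cast_one, neg_one_mul, ← hx, neg_sub]⟩
  · exact ⟨i, hi, 1, rfl, by rw [Int.cast_one, one_mul, hx]⟩

lemma exists_digits_of_walk {N d : ℕ} {u v : ZMod N} (p : (recCirc N d).Walk u v) :
    ∃ L : List ℤ, L.length = Nat.clog d N ∧ (ofDigits d L : ZMod N) = v - u ∧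
      weight L ≤ p.length := by
  induction p with
  | nil =>
    exact ⟨List.replicate _ 0, List.length_replicate, by simp [ofDigits_replicate_zero],
      by simp [weight_replicate_zero]⟩
  | @cons u w v h q ih =>
    obtain ⟨L, hlen, hL, hw⟩ := ih
    obtain ⟨i, hi, ε, hε, hstep⟩ := exists_sign_of_adj h
    refine ⟨L.modify i (· + ε), by rw [List.length_modify, hlen], ?_, ?_⟩
    · rw [ofDigits_modify_add d ε L i (hlen ▸ hi)]
      push_cast
      rw [hL, ← hstep]
      ring
    · have := weight_modify_add_le ε L i
      rw [SimpleGraph.Walk.length_cons]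
      omega

section
variable {r m : ℕ}

local notation "𝒱" => ZMod (r * (2 * r + 1) ^ m)
local notation "𝒢" => recCirc (r * (2 * r + 1) ^ m) (2 * r + 1)
local notation "δ" => ((2 * r + 1 : ℕ) : 𝒱)

lemma clog_eq (hr : 1 < r) : Nat.clog (2 * r + 1) (r * (2 * r + 1) ^ m) = m + 1 := by
  have hb : 1 < 2 * r + 1 := by omega
  refine le_antisymm ((Nat.clog_le_iff_le_pow hb).2 ?_) ((Nat.lt_clog_iff_pow_lt hb).2 ?_)
  · rw [pow_succ']
    exact Nat.mul_le_mul_right _ (by omega)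
  · exact lt_mul_left (by positivity) hr

lemma pow_add_pow_lt (hr : 2 < r) {i j : ℕ} (hi : i ≤ m) (hj : j ≤ m) :
    (2 * r + 1) ^ i + (2 * r + 1) ^ j < r * (2 * r + 1) ^ m := by
  have := Nat.pow_le_pow_right (show 0 < 2 * r + 1 by omega) hi
  have := Nat.pow_le_pow_right (show 0 < 2 * r + 1 by omega) hj
  have : 3 * (2 * r + 1) ^ m ≤ r * (2 * r + 1) ^ m := Nat.mul_le_mul_right _ hr
  have : 0 < (2 * r + 1) ^ m := by positivity
  omega

lemma pow_lt (hr : 1 < r) {i : ℕ} (hi : i ≤ m) : (2 * r + 1) ^ i < r * (2 * r + 1) ^ m :=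
  (Nat.pow_le_pow_right (by omega) hi).trans_lt (lt_mul_left (by positivity) hr)

lemma jump_injective (hr : 1 < r) {i j : ℕ} (hi : i ≤ m) (hj : j ≤ m) (h : δ ^ i = δ ^ j) :
    i = j := by
  have := pow_lt hr hi
  have := pow_lt hr hj
  rw [← Nat.cast_pow, ← Nat.cast_pow, ZMod.natCast_eq_natCast_iff', Nat.mod_eq_of_lt (by omega),
    Nat.mod_eq_of_lt (by omega)] at h
  exact Nat.pow_right_injective (by omega) h

lemma jump_add_jump_ne_zero (hr : 2 < r) {i j : ℕ} (hi : i ≤ m) (hj : j ≤ m) :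
    δ ^ i + δ ^ j ≠ 0 := by
  rw [← Nat.cast_pow, ← Nat.cast_pow, ← Nat.cast_add, Ne, ZMod.natCast_eq_zero_iff]
  exact Nat.not_dvd_of_pos_of_lt (by positivity) (pow_add_pow_lt hr hi hj)

lemma adj_add_jump (hr : 1 < r) {i : ℕ} (hi : i ≤ m) (w : 𝒱) : (𝒢).Adj w (w + δ ^ i) := by
  rw [recCirc, circulantGraph_adj]
  refine ⟨fun h => ?_, Or.inr ⟨i, by rw [clog_eq hr]; omega, by ring⟩⟩
  have h0 : ((((2 * r + 1) ^ i : ℕ)) : 𝒱) = 0 := by rw [Nat.cast_pow, ← left_eq_add.1 h]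
  rw [ZMod.natCast_eq_zero_iff] at h0
  exact Nat.not_dvd_of_pos_of_lt (by positivity) (pow_lt hr hi) h0

def blockSize (r m i : ℕ) : ℕ := if i < m then r else r / 2

lemma blockSize_pos (hr : 1 < r) (i : ℕ) : 0 < blockSize r m i := by
  unfold blockSize; split_ifs <;> omega

lemma blockSize_le (i : ℕ) : blockSize r m i ≤ r := by
  unfold blockSize; split_ifs <;> omega

lemma blockSize_dvd (hre : Even r) (i : ℕ) : blockSize r m i ∣ r := by
  unfold blockSize
  split_ifs
  · exact dvd_rfl
  · exact Nat.div_dvd_of_dvd (even_iff_two_dvd.1 hre)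

def levelColor (i : ℕ) (a : 𝒱) : ℕ := i * r + (a.cast : ZMod (blockSize r m i)).val

lemma levelColor_mem_Ico (hr : 1 < r) (i : ℕ) (a : 𝒱) :
    i * r ≤ levelColor i a ∧ levelColor i a < i * r + blockSize r m i := by
  have : NeZero (blockSize r m i) := ⟨(blockSize_pos hr i).ne'⟩
  have := ZMod.val_lt (a.cast : ZMod (blockSize r m i))
  unfold levelColor
  omega

lemma levelColor_lt (hr : 1 < r) {i : ℕ} (hi : i ≤ m) (a : 𝒱) :
    levelColor i a < r * m + r / 2 := by
  have h := (levelColor_mem_Ico hr i a).2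
  unfold blockSize at h
  split_ifs at h with him
  · have : (i + 1) * r ≤ m * r := Nat.mul_le_mul_right _ him
    rw [add_one_mul] at this
    rw [mul_comm r m]
    omega
  · obtain rfl : i = m := by omega
    rw [mul_comm r i]
    exact h

lemma levelColor_add_nsmul (hre : Even r) (i t : ℕ) (a : 𝒱) :
    levelColor i (a + t • δ ^ i) = i * r + ((a.cast : ZMod (blockSize r m i)) + t).val := by
  have hc : blockSize r m i ∣ r * (2 * r + 1) ^ m := (blockSize_dvd hre i).trans (dvd_mul_right _ _)
  have hδ : ((2 * r + 1 : ℕ) : ZMod (blockSize r m i)) = 1 := by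
    rw [Nat.cast_add, Nat.cast_one, add_eq_right, ZMod.natCast_eq_zero_iff]
    exact (blockSize_dvd hre i).trans (dvd_mul_left _ _)
  unfold levelColor
  rw [← ZMod.castHom_apply (h := hc), ← ZMod.castHom_apply (h := hc), map_add, map_nsmul, map_pow,
    map_natCast, hδ, one_pow, nsmul_one]

-- Every edge is `s(a, a + δ ^ i)` for a unique `a` and `i ≤ m` (`edgeColor_mk`).
open Classical in
noncomputable def edgeColor (e : Sym2 𝒱) : ℕ :=
  if h : ∃ p : 𝒱 × ℕ, p.2 ≤ m ∧ e = s(p.1, p.1 + δ ^ p.2) then levelColor h.choose.2 h.choose.1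
  else 0

lemma edgeColor_mk (hr : 2 < r) {i : ℕ} (hi : i ≤ m) (a : 𝒱) :
    edgeColor s(a, a + δ ^ i) = levelColor i a := by
  have h : ∃ p : 𝒱 × ℕ, p.2 ≤ m ∧ s(a, a + δ ^ i) = s(p.1, p.1 + δ ^ p.2) := ⟨(a, i), hi, rfl⟩
  rw [edgeColor, dif_pos h]
  obtain ⟨hj, he⟩ := h.choose_spec
  rcases Sym2.eq_iff.1 he with ⟨ha, hb⟩ | ⟨ha, hb⟩
  · rw [← ha, ← jump_injective (r := r) (by omega) hi hj (by rwa [← ha, add_right_inj] at hb)]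
  · exact absurd (by linear_combination hb - ha) (jump_add_jump_ne_zero hr hi hj)

lemma edgeColor_lt (hr : 1 < r) (e : Sym2 𝒱) : edgeColor e < r * m + r / 2 := by
  unfold edgeColor
  split_ifs with h
  · exact levelColor_lt hr h.choose_spec.1 _
  · have : 0 < r / 2 := by omega
    omega

lemma nodup_map_range_add_val {c k : ℕ} [NeZero c] (hk : k ≤ c) (x : ZMod c) (n : ℕ) :
    ((List.range k).map fun t : ℕ => n + (x + (t : ZMod c)).val).Nodup := by
  refine List.Nodup.map_on (fun t ht t' ht' h => ?_) List.nodup_range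
  rw [List.mem_range] at ht ht'
  have h' : ((t : ℕ) : ZMod c) = t' := add_left_cancel (a := x) (ZMod.val_injective c (by omega))
  rwa [ZMod.natCast_eq_natCast_iff', Nat.mod_eq_of_lt (by omega), Nat.mod_eq_of_lt (by omega)] at h'

lemma exists_rainbow_run (hr : 2 < r) (hre : Even r) {i k : ℕ} (hi : i ≤ m)
    (hk : k ≤ blockSize r m i) (u : 𝒱) :
    ∃ p : (𝒢).Walk u (u + k • δ ^ i), p.length = k ∧ (p.edges.map edgeColor).Nodup ∧
      ∀ c ∈ p.edges.map edgeColor, i * r ≤ c ∧ c < (i + 1) * r := by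
  obtain ⟨p, hp⟩ := exists_walk_add_nsmul (adj_add_jump (r := r) (by omega) hi) u k
  have hcol : p.edges.map edgeColor = (List.range k).map fun t => levelColor i (u + t • δ ^ i) := by
    rw [hp, List.map_map]
    exact List.map_congr_left fun t _ => edgeColor_mk hr hi _
  refine ⟨p, by simpa using congrArg List.length hp, ?_, ?_⟩
  · have : NeZero (blockSize r m i) := ⟨(blockSize_pos (by omega) i).ne'⟩
    simpa only [hcol, levelColor_add_nsmul hre] using nodup_map_range_add_val hk _ _
  · rw [hcol]
    intro c hc
    obtain ⟨t, -, rfl⟩ := List.mem_map.1 hc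
    have := levelColor_mem_Ico (by omega) i (u + t • δ ^ i)
    have := blockSize_le (r := r) (m := m) i
    rw [add_one_mul]
    omega

lemma exists_rainbow_segment (hr : 2 < r) (hre : Even r) {i : ℕ} (hi : i ≤ m) {a : ℤ}
    (ha : a.natAbs ≤ blockSize r m i) (u : 𝒱) :
    ∃ p : (𝒢).Walk u (u + a * δ ^ i), p.length = a.natAbs ∧ (p.edges.map edgeColor).Nodup ∧
      ∀ c ∈ p.edges.map edgeColor, i * r ≤ c ∧ c < (i + 1) * r := by
  rcases le_or_gt 0 a with h | h
  · obtain ⟨p, hl, hnd, hc⟩ := exists_rainbow_run hr hre hi ha u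
    have hend : u + a.natAbs • δ ^ i = u + a * δ ^ i := by
      rw [nsmul_eq_mul, ← Int.cast_natCast a.natAbs, Int.natAbs_of_nonneg h]
    exact ⟨p.copy rfl hend, by simpa using hl, by simpa using hnd, by simpa using hc⟩
  · obtain ⟨p, hl, hnd, hc⟩ := exists_rainbow_run hr hre hi ha (u + a * δ ^ i)
    have hend : u + a * δ ^ i + a.natAbs • δ ^ i = u := by
      rw [nsmul_eq_mul, ← Int.cast_natCast a.natAbs, Int.ofNat_natAbs_of_nonpos h.le]
      push_cast
      ring
    exact ⟨p.reverse.copy hend rfl, by simpa using hl, by simpa using hnd, by simpa using hc⟩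

lemma exists_rainbow_walk_at_level (hr : 2 < r) (hre : Even r) {k : ℕ} {B : List ℤ}
    (hB : Balanced r k B) {i : ℕ} (hik : i + k = m) (u : 𝒱) :
    ∃ p : (𝒢).Walk u (u + ofDigits (2 * r + 1) B * δ ^ i), p.length = weight B ∧
      (p.edges.map edgeColor).Nodup ∧ ∀ c ∈ p.edges.map edgeColor, i * r ≤ c := by
  induction hB generalizing i u with
  | @top b hb =>
    obtain rfl : i = m := by omega
    obtain ⟨p, hl, hnd, hc⟩ := exists_rainbow_segment hr hre le_rfl (a := b)
      (by simpa [blockSize] using hb) u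
    exact ⟨p.copy rfl (by simp [ofDigits]), by simpa using hl, by simpa using hnd,
      fun c h => (hc c (by simpa using h)).1⟩
  | @cons k b B hb hB ih =>
    obtain ⟨p, hl, hnd, hc⟩ := exists_rainbow_segment hr hre (by omega : i ≤ m) (a := b)
      (by simpa [blockSize, show i < m by omega] using hb) u
    obtain ⟨q, hql, hqnd, hqc⟩ := ih (i := i + 1) (by omega) (u + b * δ ^ i)
    refine ⟨(p.append q).copy rfl ?_, ?_, ?_, ?_⟩
    · simp only [ofDigits]
      push_cast
      ring
    · simp [hl, hql]
    · rw [Walk.edges_copy, Walk.edges_append, List.map_append]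
      refine hnd.append hqnd fun c hcp hcq => ?_
      have := (hc c hcp).2
      have := hqc c hcq
      omega
    · intro c h
      rw [Walk.edges_copy, Walk.edges_append, List.map_append, List.mem_append] at h
      rcases h with h | h
      · exact (hc c h).1
      · have := hqc c h
        have : i * r ≤ (i + 1) * r := Nat.mul_le_mul_right _ (by omega)
        omega

lemma exists_rainbow_walk_of_balanced (hr : 2 < r) (hre : Even r) {B : List ℤ}
    (hB : Balanced r m B) (u : 𝒱) :
    ∃ p : (𝒢).Walk u (u + ofDigits (2 * r + 1) B), p.length = weight B ∧
      (p.edges.map edgeColor).Nodup := by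
  obtain ⟨p, hl, hnd, -⟩ := exists_rainbow_walk_at_level hr hre hB (zero_add m) u
  exact ⟨p.copy rfl (by rw [pow_zero, mul_one]), by simpa using hl, by simpa using hnd⟩

lemma dist_add_ofDigits (hr : 2 < r) (hre : Even r) {B : List ℤ} (hB : Balanced r m B)
    (u : 𝒱) : (𝒢).dist u (u + ofDigits (2 * r + 1) B) = weight B := by
  obtain ⟨p, hp, -⟩ := exists_rainbow_walk_of_balanced hr hre hB u
  obtain ⟨q, hq⟩ := p.reachable.exists_walk_length_eq_dist
  obtain ⟨L, hlen, hL, hw⟩ := exists_digits_of_walk q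
  refine le_antisymm (hp ▸ dist_le p) (hq ▸ (weight_le_of_balanced hB ?_ ?_).trans hw)
  · rw [hlen, clog_eq (by omega)]
  · rw [← ZMod.intCast_eq_intCast_iff, hL, add_sub_cancel_left]

theorem strongRainbowConnected (hr : 2 < r) (hre : Even r) :
    StrongRainbowConnected (𝒢) (r * m + r / 2) := by
  refine ⟨edgeColor, fun e _ => edgeColor_lt (by omega) e, fun u v => ?_⟩
  obtain ⟨B, hB, hBx⟩ := exists_balanced_modEq (r := r) (by omega) m ((v - u).cast : ℤ)
  obtain rfl : u + ofDigits (2 * r + 1) B = v := by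
    rw [(ZMod.intCast_eq_intCast_iff _ _ _).2 hBx, ZMod.intCast_zmod_cast, add_sub_cancel]
  obtain ⟨p, hp, hnd⟩ := exists_rainbow_walk_of_balanced hr hre hB u
  have hgeo := hp.trans (dist_add_ofDigits hr hre hB u).symm
  exact ⟨p, p.isPath_of_length_eq_dist hgeo, hgeo, hnd⟩

lemma balanced_replicate_append (r k : ℕ) :
    Balanced r k (List.replicate k (r : ℤ) ++ [((r / 2 : ℕ) : ℤ)]) := by
  induction k with
  | zero => exact .top (Int.natAbs_natCast _).le
  | succ k ih => exact .cons (by simp) ih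

lemma weight_replicate_append (r k : ℕ) :
    weight (List.replicate k (r : ℤ) ++ [((r / 2 : ℕ) : ℤ)]) = r * k + r / 2 := by
  induction k with
  | zero => simp only [List.replicate_zero, List.nil_append, weight_cons, weight_nil,
      Int.natAbs_natCast, mul_zero, zero_add, add_zero]
  | succ k ih =>
    rw [List.replicate_succ, List.cons_append, weight_cons, ih, Int.natAbs_natCast]
    ring

theorem le_of_rainbowConnected (hr : 2 < r) (hre : Even r) {k : ℕ}
    (h : RainbowConnected (𝒢) k) : r * m + r / 2 ≤ k := by
  obtain ⟨c, hc, hp⟩ := h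
  let B := List.replicate m (r : ℤ) ++ [((r / 2 : ℕ) : ℤ)]
  obtain ⟨p, -, hnd⟩ := hp 0 (0 + ofDigits (2 * r + 1) B)
  calc r * m + r / 2 = (𝒢).dist 0 (0 + ofDigits (2 * r + 1) B) := by
        rw [dist_add_ofDigits hr hre (balanced_replicate_append r m), weight_replicate_append]
    _ ≤ p.length := dist_le p
    _ ≤ k := p.length_le_of_nodup_map hc hnd

end
end RecCirc

theorem rc_src_recCirc_odd_general (r m : ℕ) (hr : 4 ≤ r) (hre : Even r) :
    rc (recCirc (r * (2 * r + 1) ^ m) (2 * r + 1)) = r * m + r / 2 ∧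
    src (recCirc (r * (2 * r + 1) ^ m) (2 * r + 1)) = r * m + r / 2 :=
  rc_eq_and_src_eq (RecCirc.strongRainbowConnected (by omega) hre)
    fun _ hk => RecCirc.le_of_rainbowConnected (by omega) hre hk

/-- For d = 2r+1 with r ≥ 4 even: rc(G(rd^m,d)) = src(G(rd^m,d)) = r·m + r/2. -/
theorem rc_src_recCirc_odd (r m : ℕ) (hr : 4 ≤ r) (hre : Even r) (hm : 1 ≤ m) :
    rc (recCirc (r * (2 * r + 1) ^ m) (2 * r + 1)) = r * m + r / 2 ∧
    src (recCirc (r * (2 * r + 1) ^ m) (2 * r + 1)) = r * m + r / 2 :=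
  rc_src_recCirc_odd_general r m hr hre
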